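/- Let θ be a nonempty rim with θ̂ ≠ ∅ whose north-east arm is connected to θ̂, and set a = |θ| - |θ̂|. Then for every integer p ≥ 1 one has B(θ,p) = B(θ̂, p-a) - B(θ̂, p-a+1). -/

import Mathlib

/-- `hcoef a b = Σ_{j=0}^{min(a,b)} (-1)^j 2^{a-j} binom(a,j)`; it is `0` when `b < 0`. -/
def hcoef (a : ℕ) (b : ℤ) : ℤ :=
  ∑ j ∈ Finset.range (a + 1),
    if (j : ℤ) ≤ b then (-1) ^ j * 2 ^ (a - j) * (a.choose j) else 0

attribute [local instance] Classical.propDecidable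

/-- The south-east corners of a finite set of boxes: boxes `(i,j)` such that
neither `(i+1,j)` nor `(i,j+1)` belongs to the set. -/
def seCorners (θ : Finset (ℤ × ℤ)) : Finset (ℤ × ℤ) :=
  θ.filter fun b => (b.1 + 1, b.2) ∉ θ ∧ (b.1, b.2 + 1) ∉ θ

/-- The south-east rim of `θ`: boxes `(i,j) ∈ θ` such that no box `(i',j') ∈ θ`
has `i' > i` and `j' > j`. -/
def seRim (θ : Finset (ℤ × ℤ)) : Finset (ℤ × ℤ) :=
  θ.filter fun b => ∀ b' ∈ θ, ¬ (b.1 < b'.1 ∧ b.2 < b'.2)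

/-- `d(θ)`: the number of boxes in the south-east rim of `θ`. -/
def dRim (θ : Finset (ℤ × ℤ)) : ℕ := (seRim θ).card

/-- `θ` is a rim if it equals its own south-east rim. -/
def IsRim (θ : Finset (ℤ × ℤ)) : Prop := θ = seRim θ

/-- Two boxes are adjacent (connected) if they share a side. -/
def Adjacent (b b' : ℤ × ℤ) : Prop := |b.1 - b'.1| + |b.2 - b'.2| = 1

/-- `b'` can be reached from `b` by a chain of adjacent boxes of `θ`. -/
def Reach (θ : Finset (ℤ × ℤ)) (b b' : ℤ × ℤ) : Prop :=
  Relation.ReflTransGen (fun x y => y ∈ θ ∧ Adjacent x y) b b'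

/-- The connected components of `θ`. -/
noncomputable def comps (θ : Finset (ℤ × ℤ)) : Finset (Finset (ℤ × ℤ)) :=
  θ.image fun b => θ.filter fun b' => Reach θ b b'

/-- `N(θ)`: the number of connected components of `θ`. -/
noncomputable def Ncomp (θ : Finset (ℤ × ℤ)) : ℕ := (comps θ).card

/-- `N⁻(θ) = max(N(θ) - 1, 0)`. -/
noncomputable def Nminus (θ : Finset (ℤ × ℤ)) : ℕ := Ncomp θ - 1

/-- `N'(θ)`: the number of connected components of `θ` containing no diagonal box. -/
noncomputable def Nprime (θ : Finset (ℤ × ℤ)) : ℕ :=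
  ((comps θ).filter fun c => ∀ b ∈ c, b.1 ≠ b.2).card

/-- `B(θ,p) = Σ_S (-1)^{|S|} h(N⁻(θ∖S), d(θ∖S) - p)`, the sum over subsets `S`
of the set of south-east corners of `θ`. -/
noncomputable def Bcoef (θ : Finset (ℤ × ℤ)) (p : ℤ) : ℤ :=
  ∑ S ∈ (seCorners θ).powerset,
    (-1) ^ S.card * hcoef (Nminus (θ \ S)) ((dRim (θ \ S) : ℤ) - p)

/-- `C(θ,p) = Σ_S (-1)^{|S|} h(N'(θ∖S), d(θ∖S) - p)`, the sum over subsets `S`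
of the set of south-east corners of `θ`. -/
noncomputable def Ccoef (θ : Finset (ℤ × ℤ)) (p : ℤ) : ℤ :=
  ∑ S ∈ (seCorners θ).powerset,
    (-1) ^ S.card * hcoef (Nprime (θ \ S)) ((dRim (θ \ S) : ℤ) - p)

/-- A strict partition with largest part at most `n`, encoded as a function
with `lam i = 0` for `i` beyond the length. -/
def IsStrictPartition (n : ℕ) (lam : ℤ → ℤ) : Prop :=
  lam 1 ≤ (n : ℤ) ∧ (∀ i : ℤ, 1 ≤ i → 0 ≤ lam i) ∧
  (∀ i : ℤ, 1 ≤ i → lam (i + 1) = 0 ∨ lam (i + 1) < lam i)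

/-- The shifted Young diagram `{(i,j) : 1 ≤ i ≤ ℓ, i ≤ j ≤ λ_i + i - 1}` of a
strict partition. -/
noncomputable def shiftedD (n : ℕ) (lam : ℤ → ℤ) : Finset (ℤ × ℤ) :=
  (Finset.Icc (1 : ℤ) (n : ℤ) ×ˢ Finset.Icc (1 : ℤ) (2 * (n : ℤ))).filter
    fun b => b.1 ≤ b.2 ∧ b.2 ≤ lam b.1 + b.1 - 1

/-- `θ` is a shifted skew diagram: `θ = ν/λ` for strict partitions `λ ⊆ ν`
with `ν_1 ≤ n`. -/
def IsShiftedSkewDiagram (n : ℕ) (θ : Finset (ℤ × ℤ)) : Prop :=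
  ∃ lam nu : ℤ → ℤ, IsStrictPartition n lam ∧ IsStrictPartition n nu ∧
    (∀ i : ℤ, 1 ≤ i → lam i ≤ nu i) ∧ θ = shiftedD n nu \ shiftedD n lam

/-- All boxes of `φ` lie in a single row. -/
def IsRow (φ : Finset (ℤ × ℤ)) : Prop := ∃ i : ℤ, ∀ b ∈ φ, b.1 = i

/-- All boxes of `φ` lie in a single column. -/
def IsCol (φ : Finset (ℤ × ℤ)) : Prop := ∃ j : ℤ, ∀ b ∈ φ, b.2 = j

/-- `φ` is a row or a column. -/
def IsRowOrCol (φ : Finset (ℤ × ℤ)) : Prop := IsRow φ ∨ IsCol φ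

/-- The intersection of `θ` with the `s × s` square whose upper-right box
is `(i0, j0)`. -/
def armAt (θ : Finset (ℤ × ℤ)) (i0 j0 : ℤ) (s : ℕ) : Finset (ℤ × ℤ) :=
  θ.filter fun b =>
    i0 ≤ b.1 ∧ b.1 ≤ i0 + (s : ℤ) - 1 ∧ j0 - (s : ℤ) + 1 ≤ b.2 ∧ b.2 ≤ j0

/-!
Since `θ` is a rim, so is every `θ ∖ S`, hence `d(θ ∖ S) = |θ| - |S|` and `B(θ, p)` only records
how removing south-east corners changes the number of components. The arm `A` is a segment of
boxes that meets `θ̂` through a single box.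

If `A` lies in the top row, its east end `(i0, j0)` is the only corner of `θ` that is not a corner
of `θ̂`, and removing it (or not) never changes the number of components, which equals that of
`θ̂ ∖ S`; pairing `S` with `S ∪ {(i0, j0)}` gives the two terms of the difference.

If `A` lies in the last column, it hangs from the corner `x = (m, j0)` of `θ̂`, which itself hangs
from `θ̂` only at `w = (m, j0 - 1)`. Then `θ` and `θ̂` have the same corners, removing `x` from `θ`
splits `A` off as a new component while removing it from `θ̂` changes nothing, and the identity
becomes the recursion `h(k + 1, b) = 2 h(k, b) - h(k, b - 1)`.
-/

open Finset

theorem hcoef_succ (m : ℕ) (b : ℤ) : hcoef (m + 1) b = 2 * hcoef m b - hcoef m (b - 1) := by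
  set t : ℕ → ℤ → ℕ → ℤ := fun m b j =>
    if (j : ℤ) ≤ b then (-1) ^ j * 2 ^ (m - j) * (m.choose j) else 0 with ht
  -- Pascal's rule, term by term
  have hterm : ∀ j, t (m + 1) b (j + 1) = 2 * t m b (j + 1) - t m (b - 1) j := by
    intro j
    simp only [ht, Nat.cast_add, Nat.cast_one, Nat.choose_succ_succ', Nat.add_sub_add_right]
    by_cases hj : (j : ℤ) + 1 ≤ b
    · rw [if_pos hj, if_pos hj, if_pos (by omega)]
      rcases lt_or_ge j m with hjm | hjm
      · rw [show m - j = m - (j + 1) + 1 by omega]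
        ring
      · rw [Nat.choose_eq_zero_of_lt (by omega : m < j + 1)]
        ring
    · rw [if_neg hj, if_neg hj, if_neg (by omega)]
      ring
  have hzero : t (m + 1) b 0 = 2 * t m b 0 := by
    simp only [ht, Nat.cast_zero, pow_zero, Nat.sub_zero, Nat.choose_zero_right]
    split_ifs <;> ring
  have hvanish : t m b (m + 1) = 0 := by simp [ht, Nat.choose_succ_self]
  have h₁ : hcoef (m + 1) b = ∑ j ∈ range (m + 1), t (m + 1) b (j + 1) + t (m + 1) b 0 :=
    sum_range_succ' _ _
  have h₂ : hcoef m b = ∑ j ∈ range (m + 1), t m b (j + 1) + t m b 0 := by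
    rw [← sum_range_succ' (t m b), sum_range_succ, hvanish, add_zero]
    rfl
  have h₃ : hcoef m (b - 1) = ∑ j ∈ range (m + 1), t m (b - 1) j := rfl
  rw [h₁, h₂, h₃, sum_congr rfl fun j _ => hterm j, sum_sub_distrib, hzero,
    ← mul_sum]
  ring

theorem Adjacent.symm {b c : ℤ × ℤ} (h : Adjacent b c) : Adjacent c b := by
  unfold Adjacent at *
  rwa [abs_sub_comm, abs_sub_comm c.2]

theorem Adjacent.eq_or_eq_or_eq_or_eq {b c : ℤ × ℤ} (h : Adjacent b c) :
    c = (b.1 + 1, b.2) ∨ c = (b.1 - 1, b.2) ∨ c = (b.1, b.2 + 1) ∨ c = (b.1, b.2 - 1) := by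
  obtain ⟨i, j⟩ := b
  obtain ⟨k, l⟩ := c
  unfold Adjacent at h
  simp only [Prod.mk.injEq]
  rcases abs_cases (i - k) with ⟨h1, _⟩ | ⟨h1, _⟩ <;>
    rcases abs_cases (j - l) with ⟨h2, _⟩ | ⟨h2, _⟩ <;> rw [h1, h2] at h <;> omega

theorem Reach.eq_or_mem {θ : Finset (ℤ × ℤ)} {b c : ℤ × ℤ} (h : Reach θ b c) : c = b ∨ c ∈ θ := by
  induction h with
  | refl => exact Or.inl rfl
  | tail _ hyz _ => exact Or.inr hyz.1

theorem Reach.mono {θ ψ : Finset (ℤ × ℤ)} (hθψ : θ ⊆ ψ) {b c : ℤ × ℤ} (h : Reach θ b c) :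
    Reach ψ b c :=
  Relation.ReflTransGen.mono (fun _ _ hxy => ⟨hθψ hxy.1, hxy.2⟩) _ _ h

theorem Reach.symm {θ : Finset (ℤ × ℤ)} {b c : ℤ × ℤ} (hb : b ∈ θ) (h : Reach θ b c) :
    Reach θ c b := by
  induction h with
  | refl => exact Relation.ReflTransGen.refl
  | @tail x y hbx hxy ih =>
      have hx : x ∈ θ := (Reach.eq_or_mem hbx).elim (· ▸ hb) id
      exact Relation.ReflTransGen.head ⟨hx, hxy.2.symm⟩ ih

def BoxConnected (φ : Finset (ℤ × ℤ)) : Prop := ∀ b ∈ φ, ∀ b' ∈ φ, Reach φ b b'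

theorem boxConnected_singleton (b : ℤ × ℤ) : BoxConnected {b} := by
  intro x hx y hy
  rw [mem_singleton] at hx hy
  subst hx hy
  exact Relation.ReflTransGen.refl

theorem boxConnected_image_Icc (f : ℤ → ℤ × ℤ) (hf : ∀ t, Adjacent (f t) (f (t + 1)))
    (t₁ t₂ : ℤ) : BoxConnected ((Icc t₁ t₂).image f) := by
  have hreach : ∀ t ∈ Icc t₁ t₂, Reach ((Icc t₁ t₂).image f) (f t₁) (f t) := by
    intro t ht
    rw [mem_Icc] at ht
    induction t, ht.1 using Int.leInduction with
    | base => exact Relation.ReflTransGen.refl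
    | succ t ht₁ ih =>
        refine (ih ⟨ht₁, by omega⟩).tail ⟨mem_image_of_mem f ?_, hf t⟩
        exact mem_Icc.2 ⟨by omega, ht.2⟩
  intro b hb b' hb'
  obtain ⟨t, ht, rfl⟩ := mem_image.1 hb
  obtain ⟨t', ht', rfl⟩ := mem_image.1 hb'
  have hf₁ : f t₁ ∈ (Icc t₁ t₂).image f :=
    mem_image_of_mem f (mem_Icc.2 ⟨le_rfl, (mem_Icc.1 ht).1.trans (mem_Icc.1 ht).2⟩)
  exact ((hreach t ht).symm hf₁).trans (hreach t' ht')

noncomputable def compOf (θ : Finset (ℤ × ℤ)) (b : ℤ × ℤ) : Finset (ℤ × ℤ) :=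
  θ.filter fun b' => Reach θ b b'

theorem comps_eq_image_compOf (θ : Finset (ℤ × ℤ)) : comps θ = θ.image (compOf θ) := rfl

theorem mem_compOf {θ : Finset (ℤ × ℤ)} {b c : ℤ × ℤ} : c ∈ compOf θ b ↔ c ∈ θ ∧ Reach θ b c :=
  mem_filter

theorem compOf_subset (θ : Finset (ℤ × ℤ)) (b : ℤ × ℤ) : compOf θ b ⊆ θ := filter_subset _ _

theorem mem_compOf_self {θ : Finset (ℤ × ℤ)} {b : ℤ × ℤ} (hb : b ∈ θ) : b ∈ compOf θ b :=
  mem_compOf.2 ⟨hb, Relation.ReflTransGen.refl⟩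

theorem compOf_eq_of_reach {θ : Finset (ℤ × ℤ)} {b c : ℤ × ℤ} (hb : b ∈ θ) (h : Reach θ b c) :
    compOf θ c = compOf θ b := by
  ext d
  simp only [mem_compOf, and_congr_right_iff]
  exact fun _ => ⟨h.trans, ((h.symm hb).trans ·)⟩

theorem one_le_Ncomp {θ : Finset (ℤ × ℤ)} (h : θ.Nonempty) : 1 ≤ Ncomp θ :=
  card_pos.2 (h.image _)

theorem BoxConnected.Ncomp_eq_one {θ : Finset (ℤ × ℤ)} (hθ : BoxConnected θ) (h : θ.Nonempty) :
    Ncomp θ = 1 := by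
  obtain ⟨b, hb⟩ := h
  rw [Ncomp, comps_eq_image_compOf, card_eq_one]
  refine ⟨compOf θ b, eq_singleton_iff_unique_mem.2 ⟨mem_image_of_mem _ hb, ?_⟩⟩
  rintro _ hc'
  obtain ⟨c, hc, rfl⟩ := mem_image.1 hc'
  exact compOf_eq_of_reach hb (hθ b hb c hc)

section Attach

variable {α φ : Finset (ℤ × ℤ)} {v b c : ℤ × ℤ}

theorem Reach.of_union_of_not_adjacent (hαφ : ∀ u ∈ α, ∀ w ∈ φ, ¬ Adjacent u w) (hb : b ∈ φ)
    (h : Reach (α ∪ φ) b c) : c ∈ φ ∧ Reach φ b c := by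
  induction h with
  | refl => exact ⟨hb, Relation.ReflTransGen.refl⟩
  | @tail x y _ hxy ih =>
      rcases mem_union.1 hxy.1 with hy | hy
      · exact absurd hxy.2.symm (hαφ y hy x ih.1)
      · exact ⟨hy, ih.2.tail ⟨hy, hxy.2⟩⟩

theorem compOf_union_of_not_adjacent (hαφ : ∀ u ∈ α, ∀ w ∈ φ, ¬ Adjacent u w) (hb : b ∈ φ) :
    compOf (α ∪ φ) b = compOf φ b := by
  ext c
  simp only [mem_compOf]
  exact ⟨fun h => Reach.of_union_of_not_adjacent hαφ hb h.2,
    fun h => ⟨mem_union_right _ h.1, h.2.mono subset_union_right⟩⟩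

theorem Ncomp_union_of_not_adjacent (hd : Disjoint α φ)
    (hαφ : ∀ u ∈ α, ∀ w ∈ φ, ¬ Adjacent u w) :
    Ncomp (α ∪ φ) = Ncomp α + Ncomp φ := by
  have hφα : ∀ w ∈ φ, ∀ u ∈ α, ¬ Adjacent w u := fun w hw u hu h => hαφ u hu w hw h.symm
  have hcomps : comps (α ∪ φ) = comps α ∪ comps φ := by
    rw [comps_eq_image_compOf, comps_eq_image_compOf, comps_eq_image_compOf, image_union,
      image_congr fun b hb => compOf_union_of_not_adjacent hαφ hb]
    congr 1
    refine image_congr fun b hb => ?_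
    rw [union_comm, compOf_union_of_not_adjacent hφα hb]
  rw [Ncomp, Ncomp, Ncomp, hcomps, card_union_of_disjoint]
  refine disjoint_left.2 fun c hcα hcφ => ?_
  obtain ⟨b, hb, rfl⟩ := mem_image.1 hcα
  obtain ⟨b', -, hbb'⟩ := mem_image.1 hcφ
  have hb' : b ∈ compOf φ b' := (congrArg (b ∈ ·) hbb').mpr (mem_compOf_self hb)
  exact disjoint_left.1 hd hb (compOf_subset φ b' hb')

theorem Reach.of_union_of_adjacent_eq (hαφ : ∀ u ∈ α, ∀ w ∈ φ, Adjacent u w → w = v) (hb : b ∈ φ)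
    (h : Reach (α ∪ φ) b c) : (c ∈ φ ∧ Reach φ b c) ∨ (c ∈ α ∧ Reach φ b v) := by
  induction h with
  | refl => exact Or.inl ⟨hb, Relation.ReflTransGen.refl⟩
  | @tail x y _ hxy ih =>
      rcases mem_union.1 hxy.1 with hy | hy
      · refine Or.inr ⟨hy, ?_⟩
        rcases ih with ⟨hx, hbx⟩ | ⟨_, hbv⟩
        · exact hαφ y hy x hx hxy.2.symm ▸ hbx
        · exact hbv
      · refine Or.inl ⟨hy, ?_⟩
        rcases ih with ⟨_, hbx⟩ | ⟨hx, hbv⟩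
        · exact hbx.tail ⟨hy, hxy.2⟩
        · exact hαφ x hx y hy hxy.2 ▸ hbv

structure IsAttachedAt (α φ : Finset (ℤ × ℤ)) (v : ℤ × ℤ) : Prop where
  disjoint : Disjoint α φ
  connected : BoxConnected α
  mem : v ∈ φ
  exists_adjacent : ∃ u ∈ α, Adjacent u v
  eq_of_adjacent : ∀ u ∈ α, ∀ w ∈ φ, Adjacent u w → w = v

namespace IsAttachedAt

theorem mono {ψ : Finset (ℤ × ℤ)} (h : IsAttachedAt α φ v) (hψ : ψ ⊆ φ) (hv : v ∈ ψ) :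
    IsAttachedAt α ψ v where
  disjoint := h.disjoint.mono_right hψ
  connected := h.connected
  mem := hv
  exists_adjacent := h.exists_adjacent
  eq_of_adjacent u hu w hw := h.eq_of_adjacent u hu w (hψ hw)

theorem reach_union (h : IsAttachedAt α φ v) (hb : b ∈ α) : Reach (α ∪ φ) b v := by
  obtain ⟨u, hu, huv⟩ := h.exists_adjacent
  exact ((h.connected b hb u hu).mono subset_union_left).tail ⟨mem_union_right _ h.mem, huv⟩

theorem compOf_union_inter (h : IsAttachedAt α φ v) (hb : b ∈ φ) :
    compOf (α ∪ φ) b ∩ φ = compOf φ b := by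
  ext c
  simp only [mem_inter, mem_compOf]
  constructor
  · rintro ⟨⟨-, hbc⟩, hc⟩
    rcases Reach.of_union_of_adjacent_eq h.eq_of_adjacent hb hbc with ⟨-, hbc⟩ | ⟨hc', -⟩
    · exact ⟨hc, hbc⟩
    · exact absurd hc (disjoint_left.1 h.disjoint hc')
  · rintro ⟨hc, hbc⟩
    exact ⟨⟨mem_union_right _ hc, hbc.mono subset_union_right⟩, hc⟩

theorem comps_union (h : IsAttachedAt α φ v) : comps (α ∪ φ) = φ.image (compOf (α ∪ φ)) := by
  rw [comps_eq_image_compOf, image_union, union_eq_right]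
  intro c hc
  obtain ⟨b, hb, rfl⟩ := mem_image.1 hc
  rw [← compOf_eq_of_reach (mem_union_left _ hb) (h.reach_union hb)]
  exact mem_image_of_mem _ h.mem

theorem Ncomp_union (h : IsAttachedAt α φ v) : Ncomp (α ∪ φ) = Ncomp φ := by
  have himage : φ.image (compOf φ) = (φ.image (compOf (α ∪ φ))).image (· ∩ φ) := by
    rw [image_image]
    exact image_congr fun b hb => (h.compOf_union_inter hb).symm
  rw [Ncomp, Ncomp, h.comps_union, comps_eq_image_compOf, himage]
  refine (card_image_of_injOn fun c₁ hc₁ c₂ hc₂ hc => ?_).symm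
  obtain ⟨b₁, hb₁, rfl⟩ := mem_image.1 hc₁
  obtain ⟨b₂, hb₂, rfl⟩ := mem_image.1 hc₂
  have hb : b₁ ∈ compOf (α ∪ φ) b₂ ∩ φ :=
    hc ▸ mem_inter.2 ⟨mem_compOf_self (mem_union_right _ hb₁), hb₁⟩
  exact compOf_eq_of_reach (mem_union_right _ hb₂) (mem_compOf.1 (mem_inter.1 hb).1).2

end IsAttachedAt

end Attach

section Rim

variable {θ A : Finset (ℤ × ℤ)}

theorem IsRim.not_lt_and_lt (hθ : IsRim θ) {b b' : ℤ × ℤ} (hb : b ∈ θ) (hb' : b' ∈ θ) :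
    ¬ (b.1 < b'.1 ∧ b.2 < b'.2) := by
  rw [hθ] at hb
  exact (mem_filter.1 hb).2 b' hb'

theorem IsRim.subset {φ : Finset (ℤ × ℤ)} (hθ : IsRim θ) (h : φ ⊆ θ) : IsRim φ :=
  (filter_true_of_mem fun _ hb _ hb' => hθ.not_lt_and_lt (h hb) (h hb')).symm

theorem IsRim.dRim_eq_card (hθ : IsRim θ) : dRim θ = #θ := by
  rw [dRim, ← hθ]

theorem seCorners_subset (θ : Finset (ℤ × ℤ)) : seCorners θ ⊆ θ := filter_subset _ _

theorem mem_seCorners {b : ℤ × ℤ} :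
    b ∈ seCorners θ ↔ b ∈ θ ∧ (b.1 + 1, b.2) ∉ θ ∧ (b.1, b.2 + 1) ∉ θ :=
  mem_filter

theorem Bcoef_of_isRim (hθ : IsRim θ) (p : ℤ) :
    Bcoef θ p = ∑ S ∈ (seCorners θ).powerset,
      (-1) ^ #S * hcoef (Nminus (θ \ S)) (#θ - #S - p) := by
  refine sum_congr rfl fun S hS => ?_
  have hSθ : S ⊆ θ := (mem_powerset.1 hS).trans (seCorners_subset θ)
  rw [(hθ.subset sdiff_subset).dRim_eq_card, card_sdiff_of_subset hSθ,
    Nat.cast_sub (card_le_card hSθ)]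

theorem Bcoef_sdiff_of_isRim (hθ : IsRim θ) (hA : A ⊆ θ) (p : ℤ) :
    Bcoef (θ \ A) (p - #A) = ∑ S ∈ (seCorners (θ \ A)).powerset,
      (-1) ^ #S * hcoef (Nminus ((θ \ A) \ S)) (#θ - #S - p) := by
  rw [Bcoef_of_isRim (hθ.subset sdiff_subset), card_sdiff_of_subset hA,
    Nat.cast_sub (card_le_card hA)]
  refine sum_congr rfl fun S _ => ?_
  ring_nf

theorem Bcoef_eq_sub_of_seCorners_eq_insert (hθ : IsRim θ) (hA : A ⊆ θ) {x : ℤ × ℤ}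
    (hx : x ∈ A) (hC : seCorners θ = insert x (seCorners (θ \ A)))
    (hN : ∀ S ⊆ seCorners (θ \ A),
      Nminus (θ \ S) = Nminus ((θ \ A) \ S) ∧ Nminus (θ \ insert x S) = Nminus ((θ \ A) \ S))
    (p : ℤ) : Bcoef θ p = Bcoef (θ \ A) (p - #A) - Bcoef (θ \ A) (p - #A + 1) := by
  have hxC : x ∉ seCorners (θ \ A) := fun h => (mem_sdiff.1 (seCorners_subset _ h)).2 hx
  rw [show p - #A + 1 = p + 1 - #A by ring, Bcoef_sdiff_of_isRim hθ hA,
    Bcoef_sdiff_of_isRim hθ hA, Bcoef_of_isRim hθ, hC, sum_powerset_insert hxC,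
    ← sum_add_distrib, ← sum_sub_distrib]
  refine sum_congr rfl fun S hS => ?_
  obtain ⟨hS₁, hS₂⟩ := hN S (mem_powerset.1 hS)
  rw [hS₁, hS₂, card_insert_of_notMem fun h => hxC (mem_powerset.1 hS h)]
  push_cast
  ring_nf

theorem Bcoef_eq_sub_of_seCorners_eq (hθ : IsRim θ) (hA : A ⊆ θ) {x : ℤ × ℤ}
    (hx : x ∈ seCorners (θ \ A)) (hC : seCorners θ = seCorners (θ \ A))
    (hN : ∀ S ⊆ (seCorners (θ \ A)).erase x,
      Nminus (θ \ S) = Nminus ((θ \ A) \ S) ∧ Nminus ((θ \ A) \ insert x S) = Nminus ((θ \ A) \ S) ∧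
        Nminus (θ \ insert x S) = Nminus ((θ \ A) \ S) + 1)
    (p : ℤ) : Bcoef θ p = Bcoef (θ \ A) (p - #A) - Bcoef (θ \ A) (p - #A + 1) := by
  have hxC : x ∉ (seCorners (θ \ A)).erase x := notMem_erase _ _
  rw [show p - #A + 1 = p + 1 - #A by ring, Bcoef_sdiff_of_isRim hθ hA,
    Bcoef_sdiff_of_isRim hθ hA, Bcoef_of_isRim hθ, hC, ← insert_erase hx,
    sum_powerset_insert hxC, sum_powerset_insert hxC, sum_powerset_insert hxC,
    ← sum_add_distrib, ← sum_add_distrib, ← sum_add_distrib, ← sum_sub_distrib]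
  refine sum_congr rfl fun S hS => ?_
  obtain ⟨hS₁, hS₂, hS₃⟩ := hN S (mem_powerset.1 hS)
  rw [hS₁, hS₂, hS₃, card_insert_of_notMem fun h => hxC (mem_powerset.1 hS h)]
  have hrec := hcoef_succ (Nminus ((θ \ A) \ S)) (#θ - (#S + 1) - p)
  push_cast
  ring_nf at hrec ⊢
  linear_combination -(-1) ^ #S * hrec

end Rim

section Arm

variable {θ A S : Finset (ℤ × ℤ)} {x y : ℤ × ℤ}

theorem IsAttachedAt.Ncomp_sdiff (hA : A ⊆ θ) (h : IsAttachedAt A (θ \ A) x)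
    (hS : S ⊆ θ \ A) (hx : x ∉ S) : Ncomp (θ \ S) = Ncomp ((θ \ A) \ S) := by
  have hsplit : θ \ S = A ∪ ((θ \ A) \ S) := by
    ext b
    have := @hA b
    have := @hS b
    simp only [mem_sdiff, mem_union] at *
    tauto
  rw [hsplit, (h.mono sdiff_subset (mem_sdiff.2 ⟨h.mem, hx⟩)).Ncomp_union]

theorem IsAttachedAt.Ncomp_sdiff_insert (hA : A ⊆ θ) (h : IsAttachedAt A (θ \ A) x)
    (hS : S ⊆ θ \ A) : Ncomp (θ \ insert x S) = Ncomp ((θ \ A) \ insert x S) + 1 := by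
  have hsplit : θ \ insert x S = A ∪ ((θ \ A) \ insert x S) := by
    ext b
    have := @hA b
    have := @hS b
    have hxA : x ∉ A := (mem_sdiff.1 h.mem).2
    simp only [mem_sdiff, mem_union, mem_insert] at *
    grind
  have hsep : ∀ u ∈ A, ∀ w ∈ (θ \ A) \ insert x S, ¬ Adjacent u w := fun u hu w hw huw =>
    (mem_sdiff.1 hw).2 (mem_insert.2 (Or.inl (h.eq_of_adjacent u hu w (mem_sdiff.1 hw).1 huw)))
  obtain ⟨u, hu, -⟩ := h.exists_adjacent
  rw [hsplit, Ncomp_union_of_not_adjacent (h.disjoint.mono_right sdiff_subset) hsep,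
    h.connected.Ncomp_eq_one ⟨u, hu⟩, add_comm]

theorem Bcoef_eq_sub_of_isAttachedAt_tip (hθ : IsRim θ) (hA : A ⊆ θ) (hx : x ∈ A)
    (hAy : IsAttachedAt A (θ \ A) y) (hA' : A = {x} ∨ IsAttachedAt (A.erase x) (θ \ A) y)
    (hy : y ∉ seCorners (θ \ A)) (hC : seCorners θ = insert x (seCorners (θ \ A))) (p : ℤ) :
    Bcoef θ p = Bcoef (θ \ A) (p - #A) - Bcoef (θ \ A) (p - #A + 1) := by
  refine Bcoef_eq_sub_of_seCorners_eq_insert hθ hA hx hC (fun S hS => ?_) p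
  have hSA : S ⊆ θ \ A := hS.trans (seCorners_subset _)
  have hyS : y ∉ S := fun h => hy (hS h)
  refine ⟨by rw [Nminus, Nminus, hAy.Ncomp_sdiff hA hSA hyS], ?_⟩
  rw [sdiff_insert, ← erase_sdiff_comm]
  rcases hA' with rfl | hA'
  · rw [← sdiff_singleton_eq_erase]
  · have hθA : θ.erase x \ A.erase x = θ \ A := by
      ext b
      have := @hA b
      simp only [mem_sdiff, mem_erase]
      grind
    have hA'' : IsAttachedAt (A.erase x) (θ.erase x \ A.erase x) y := hθA ▸ hA'
    rw [Nminus, Nminus, hA''.Ncomp_sdiff (erase_subset_erase x hA) (hθA ▸ hSA) hyS, hθA]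

theorem Bcoef_eq_sub_of_isAttachedAt_pendant {w : ℤ × ℤ} (hθ : IsRim θ) (hA : A ⊆ θ)
    (hAx : IsAttachedAt A (θ \ A) x) (hxw : IsAttachedAt {x} ((θ \ A) \ {x}) w)
    (hx : x ∈ seCorners (θ \ A)) (hw : w ∉ seCorners (θ \ A))
    (hC : seCorners θ = seCorners (θ \ A)) (p : ℤ) :
    Bcoef θ p = Bcoef (θ \ A) (p - #A) - Bcoef (θ \ A) (p - #A + 1) := by
  refine Bcoef_eq_sub_of_seCorners_eq hθ hA hx hC (fun S hS => ?_) p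
  have hSA : S ⊆ θ \ A := hS.trans ((erase_subset _ _).trans (seCorners_subset _))
  have hxS : x ∉ S := fun h => notMem_erase x _ (hS h)
  have hwS : w ∉ S := fun h => hw (erase_subset _ _ (hS h))
  have hSx : S ⊆ (θ \ A) \ {x} := fun b hb => mem_sdiff.2 ⟨hSA hb, by
    rw [mem_singleton]; rintro rfl; exact hxS hb⟩
  have hpendant : Ncomp ((θ \ A) \ S) = Ncomp ((θ \ A) \ insert x S) := by
    rw [hxw.Ncomp_sdiff (singleton_subset_iff.2 (seCorners_subset _ hx)) hSx hwS,
      sdiff_sdiff_left, sup_eq_union, ← insert_eq]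
  have hpos : 1 ≤ Ncomp ((θ \ A) \ S) :=
    one_le_Ncomp ⟨w, mem_sdiff.2 ⟨(mem_sdiff.1 hxw.mem).1, hwS⟩⟩
  simp only [Nminus]
  rw [hAx.Ncomp_sdiff hA hSA hxS, hAx.Ncomp_sdiff_insert hA hSA, ← hpendant]
  omega

end Arm

def RowConvex (θ : Finset (ℤ × ℤ)) : Prop :=
  ∀ ⦃i j₁ j₂ j : ℤ⦄, (i, j₁) ∈ θ → (i, j₂) ∈ θ → j₁ ≤ j → j ≤ j₂ → (i, j) ∈ θ

def ColConvex (θ : Finset (ℤ × ℤ)) : Prop :=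
  ∀ ⦃i₁ i₂ i j : ℤ⦄, (i₁, j) ∈ θ → (i₂, j) ∈ θ → i₁ ≤ i → i ≤ i₂ → (i, j) ∈ θ

section ShiftedDiagram

variable {n : ℕ} {μ : ℤ → ℤ}

theorem mem_shiftedD {i j : ℤ} :
    (i, j) ∈ shiftedD n μ ↔
      (1 ≤ i ∧ i ≤ n ∧ 1 ≤ j ∧ j ≤ 2 * n) ∧ i ≤ j ∧ j ≤ μ i + i - 1 := by
  rw [shiftedD, mem_filter, mem_product, mem_Icc, mem_Icc]
  tauto

/-- `μ i + i - 1` is the column of the last box in row `i` of the shifted diagram of `μ`. -/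
theorem IsStrictPartition.add_le_add {μ : ℤ → ℤ} (hμ : IsStrictPartition n μ) {i i' : ℤ}
    (hi : 1 ≤ i) (hii' : i ≤ i') (hμi' : 1 ≤ μ i') : μ i' + i' ≤ μ i + i := by
  obtain ⟨-, -, hdec⟩ := hμ
  revert hμi'
  induction i', hii' using Int.leInduction with
  | base => exact fun _ => le_rfl
  | succ k hik ih =>
      intro hμk
      rcases hdec k (hi.trans hik) with h0 | hlt
      · omega
      · have := ih (by omega)
        omega

theorem IsStrictPartition.mem_shiftedD_of_le (hμ : IsStrictPartition n μ) {i i' j : ℤ}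
    (hm : (i', j) ∈ shiftedD n μ) (hi : 1 ≤ i) (hii' : i ≤ i') : (i, j) ∈ shiftedD n μ := by
  rw [mem_shiftedD] at hm ⊢
  have := hμ.add_le_add hi hii' (by omega)
  omega

theorem IsShiftedSkewDiagram.colConvex {θ : Finset (ℤ × ℤ)} (hθ : IsShiftedSkewDiagram n θ) :
    ColConvex θ := by
  obtain ⟨lam, nu, hlam, hnu, -, rfl⟩ := hθ
  intro i₁ i₂ i j h₁ h₂ hi₁ hi₂
  rw [mem_sdiff] at h₁ h₂ ⊢
  have hpos : 1 ≤ i₁ := (mem_shiftedD.1 h₁.1).1.1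
  exact ⟨hnu.mem_shiftedD_of_le h₂.1 (by omega) hi₂,
    fun hmem => h₁.2 (hlam.mem_shiftedD_of_le hmem hpos hi₁)⟩

theorem IsShiftedSkewDiagram.rowConvex {θ : Finset (ℤ × ℤ)} (hθ : IsShiftedSkewDiagram n θ) :
    RowConvex θ := by
  obtain ⟨lam, nu, -, -, -, rfl⟩ := hθ
  intro i j₁ j₂ j h₁ h₂ hj₁ hj₂
  simp only [mem_sdiff, mem_shiftedD] at h₁ h₂ ⊢
  omega

end ShiftedDiagram

theorem mem_armAt {θ : Finset (ℤ × ℤ)} {i0 j0 : ℤ} {s : ℕ} {b : ℤ × ℤ} :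
    b ∈ armAt θ i0 j0 s ↔
      b ∈ θ ∧ i0 ≤ b.1 ∧ b.1 ≤ i0 + s - 1 ∧ j0 - s + 1 ≤ b.2 ∧ b.2 ≤ j0 :=
  mem_filter

theorem boxConnected_Ico_prod_singleton (i₁ i₂ j : ℤ) : BoxConnected (Ico i₁ i₂ ×ˢ {j}) := by
  convert boxConnected_image_Icc (·, j) (fun t => by simp [Adjacent]) i₁ (i₂ - 1) using 1
  ext ⟨i, j'⟩
  simp only [mem_product, mem_Ico, mem_singleton, mem_image, mem_Icc, Prod.mk.injEq]
  constructor
  · rintro ⟨hi, rfl⟩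
    exact ⟨i, by omega, rfl, rfl⟩
  · rintro ⟨i, hi, rfl, rfl⟩
    exact ⟨by omega, rfl⟩

theorem boxConnected_singleton_prod_Ioc (i j₁ j₂ : ℤ) : BoxConnected ({i} ×ˢ Ioc j₁ j₂) := by
  convert boxConnected_image_Icc (i, ·) (fun t => by simp [Adjacent]) (j₁ + 1) j₂ using 1
  ext ⟨i', j⟩
  simp only [mem_product, mem_Ioc, mem_singleton, mem_image, mem_Icc, Prod.mk.injEq]
  constructor
  · rintro ⟨rfl, hj⟩
    exact ⟨j, by omega, rfl, rfl⟩
  · rintro ⟨j, hj, rfl, rfl⟩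
    exact ⟨rfl, by omega⟩

theorem mem_Ico_prod_singleton_iff {i₁ i₂ j : ℤ} {b : ℤ × ℤ} :
    b ∈ Ico i₁ i₂ ×ˢ {j} ↔ i₁ ≤ b.1 ∧ b.1 < i₂ ∧ b.2 = j := by
  simp only [mem_product, mem_Ico, mem_singleton, and_assoc]

theorem mem_singleton_prod_Ioc_iff {i j₁ j₂ : ℤ} {b : ℤ × ℤ} :
    b ∈ {i} ×ˢ Ioc j₁ j₂ ↔ b.1 = i ∧ j₁ < b.2 ∧ b.2 ≤ j₂ := by
  simp only [mem_product, mem_Ioc, mem_singleton]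

structure IsTopRight (θ : Finset (ℤ × ℤ)) (i0 j0 : ℤ) : Prop where
  mem : (i0, j0) ∈ θ
  le_fst : ∀ b ∈ θ, i0 ≤ b.1
  snd_le_of_fst_eq : ∀ b ∈ θ, b.1 = i0 → b.2 ≤ j0

theorem IsTopRight.snd_le {θ : Finset (ℤ × ℤ)} {i0 j0 : ℤ} (ht : IsTopRight θ i0 j0)
    (hθ : IsRim θ) : ∀ b ∈ θ, b.2 ≤ j0 := by
  intro b hb
  rcases (ht.le_fst b hb).eq_or_lt with h | h
  · exact ht.snd_le_of_fst_eq b hb h.symm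
  · by_contra h'
    exact hθ.not_lt_and_lt ht.mem hb ⟨h, by omega⟩

/-- The configuration around the top-right box `(i0, j0)` when the north-east arm is vertical;
the arm is then `Ico i0 m ×ˢ {j0}`. -/
structure ColShape (θ : Finset (ℤ × ℤ)) (i0 j0 m : ℤ) : Prop where
  lt : i0 < m
  mem_iff : ∀ i, (i, j0) ∈ θ ↔ i0 ≤ i ∧ i ≤ m
  le_fst : ∀ b ∈ θ, b.2 < j0 → m ≤ b.1
  snd_le : ∀ b ∈ θ, b.2 ≤ j0

section ColShape

variable {θ : Finset (ℤ × ℤ)} {i0 j0 m : ℤ}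

theorem IsTopRight.exists_colShape (ht : IsTopRight θ i0 j0) (hθ : IsRim θ)
    (hcol : ColConvex θ) (hbelow : (i0 + 1, j0) ∈ θ) : ∃ m, ColShape θ i0 j0 m := by
  obtain ⟨⟨m, j⟩, hmj, hmax⟩ := exists_max_image (θ.filter (·.2 = j0)) Prod.fst
    ⟨_, mem_filter.2 ⟨ht.mem, rfl⟩⟩
  obtain ⟨hm, rfl⟩ := mem_filter.1 hmj
  have hmax' : ∀ i, (i, j) ∈ θ → i ≤ m := fun i hi => hmax (i, j) (mem_filter.2 ⟨hi, rfl⟩)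
  refine ⟨m, hmax' _ hbelow, fun i => ⟨fun hi => ⟨ht.le_fst _ hi, hmax' i hi⟩,
    fun hi => hcol ht.mem hm hi.1 hi.2⟩, fun b hb hbj => ?_, ht.snd_le hθ⟩
  by_contra h
  exact hθ.not_lt_and_lt hb hm ⟨by simpa using h, hbj⟩

theorem ColShape.armAt_eq (h : ColShape θ i0 j0 m) {t : ℕ} (ht : i0 + t ≤ m) :
    armAt θ i0 j0 t = Ico i0 (i0 + t) ×ˢ {j0} := by
  ext ⟨i, j⟩
  simp only [mem_armAt, mem_product, mem_Ico, mem_singleton]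
  constructor
  · rintro ⟨hij, hi₁, hi₂, -, hj⟩
    have := h.le_fst _ hij
    simp only at this
    omega
  · rintro ⟨hi, rfl⟩
    exact ⟨(h.mem_iff i).2 ⟨hi.1, by omega⟩, hi.1, by omega, by omega, le_rfl⟩

theorem ColShape.le_add_of_maximal (h : ColShape θ i0 j0 m) {s : ℕ}
    (hmax : ∀ s' : ℕ, 1 ≤ s' → IsRowOrCol (armAt θ i0 j0 s') → s' ≤ s) : m ≤ i0 + s := by
  have hcol : IsRowOrCol (armAt θ i0 j0 (m - i0).toNat) := by
    refine Or.inr ⟨j0, fun b hb => ?_⟩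
    rw [h.armAt_eq (by have := h.lt; omega)] at hb
    exact (mem_singleton.1 (mem_product.1 hb).2)
  have := hmax _ (by have := h.lt; omega) hcol
  omega

/-- An arm reaching past row `m` would be all of column `j0` together with nothing left of
`(m, j0)`, hence a component of `θ` by itself. -/
theorem ColShape.add_le_of_adjacent (h : ColShape θ i0 j0 m) {s : ℕ}
    (harm : IsRowOrCol (armAt θ i0 j0 s))
    (hconn : ∃ b ∈ armAt θ i0 j0 s, ∃ b' ∈ θ \ armAt θ i0 j0 s, Adjacent b b') :
    i0 + s ≤ m := by
  by_contra! hs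
  have hlt := h.lt
  have hi0 : (i0, j0) ∈ θ := (h.mem_iff _).2 ⟨le_rfl, by omega⟩
  have hi1 : (i0 + 1, j0) ∈ θ := (h.mem_iff _).2 ⟨by omega, by omega⟩
  have hcol : ∀ b ∈ armAt θ i0 j0 s, b.2 = j0 := by
    rcases harm with ⟨r, hr⟩ | ⟨c, hc⟩
    · have h₁ := hr _ (mem_armAt.2 ⟨hi0, by simp only; omega⟩)
      have h₂ := hr _ (mem_armAt.2 ⟨hi1, by simp only; omega⟩)
      simp only at h₁ h₂
      omega
    · intro b hb
      rw [hc b hb, ← hc _ (mem_armAt.2 ⟨hi0, by simp only; omega⟩)]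
  obtain ⟨u, hu, v, hv, huv⟩ := hconn
  obtain ⟨hvθ, hvA⟩ := mem_sdiff.1 hv
  have hu2 := hcol u hu
  obtain ⟨huθ, hu₁, hu₂, -, -⟩ := mem_armAt.1 hu
  have hu1 := (h.mem_iff u.1).1 (hu2 ▸ huθ)
  refine hvA (mem_armAt.2 ⟨hvθ, ?_⟩)
  rcases huv.eq_or_eq_or_eq_or_eq with rfl | rfl | rfl | rfl <;> simp only at hvθ ⊢
  · have := (h.mem_iff _).1 (hu2 ▸ hvθ); omega
  · have := (h.mem_iff _).1 (hu2 ▸ hvθ); omega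
  · have := h.snd_le _ hvθ; simp only at this; omega
  · have := h.le_fst _ hvθ (by simp only; omega); simp only at this; omega

theorem ColShape.mem_left (h : ColShape θ i0 j0 m) (hrow : RowConvex θ) {s : ℕ}
    (hmax : ∀ s' : ℕ, 1 ≤ s' → IsRowOrCol (armAt θ i0 j0 s') → s' ≤ s) (hs : i0 + s = m) :
    (m, j0 - 1) ∈ θ := by
  by_contra hleft
  have hcol : IsRowOrCol (armAt θ i0 j0 (s + 1)) := by
    refine Or.inr ⟨j0, fun ⟨i, j⟩ hb => ?_⟩
    obtain ⟨hb, hi₁, hi₂, hj₁, hj₂⟩ := mem_armAt.1 hb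
    simp only at hi₁ hi₂ hj₁ hj₂ ⊢
    by_contra hj
    have := h.le_fst _ hb (by simp only; omega)
    simp only at this
    have hmj : (m, j) ∈ θ := by rwa [show m = i by omega]
    exact hleft (hrow hmj ((h.mem_iff m).2 ⟨by have := h.lt; omega, le_rfl⟩) (by omega) (by omega))
  have := hmax (s + 1) (by omega) hcol
  omega

theorem ColShape.arm_subset (h : ColShape θ i0 j0 m) : Ico i0 m ×ˢ {j0} ⊆ θ := by
  rintro ⟨i, j⟩ hb
  obtain ⟨hi₁, hi₂, rfl⟩ := mem_Ico_prod_singleton_iff.1 hb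
  exact (h.mem_iff i).2 ⟨hi₁, hi₂.le⟩

theorem ColShape.isAttachedAt (h : ColShape θ i0 j0 m) :
    IsAttachedAt (Ico i0 m ×ˢ {j0}) (θ \ Ico i0 m ×ˢ {j0}) (m, j0) where
  disjoint := disjoint_sdiff
  connected := boxConnected_Ico_prod_singleton _ _ _
  mem := mem_sdiff.2 ⟨(h.mem_iff m).2 ⟨h.lt.le, le_rfl⟩, by simp⟩
  exists_adjacent :=
    ⟨(m - 1, j0), mem_Ico_prod_singleton_iff.2 ⟨by have := h.lt; omega, by omega, rfl⟩,
      by simp [Adjacent]⟩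
  eq_of_adjacent := by
    intro u hu w hw huw
    obtain ⟨hu₁, hu₂, hu₃⟩ := mem_Ico_prod_singleton_iff.1 hu
    obtain ⟨hwθ, hwA⟩ := mem_sdiff.1 hw
    rw [mem_Ico_prod_singleton_iff] at hwA
    rcases huw.eq_or_eq_or_eq_or_eq with rfl | rfl | rfl | rfl <;> simp only at hwθ hwA ⊢
    · have := (h.mem_iff _).1 (hu₃ ▸ hwθ)
      rw [Prod.ext_iff]
      exact ⟨by omega, hu₃⟩
    · have := (h.mem_iff _).1 (hu₃ ▸ hwθ)
      omega
    · have := h.snd_le _ hwθ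
      simp only at this
      omega
    · have := h.le_fst _ hwθ (by simp only; omega)
      simp only at this
      omega

theorem ColShape.isAttachedAt_corner (h : ColShape θ i0 j0 m) (hleft : (m, j0 - 1) ∈ θ) :
    IsAttachedAt {(m, j0)} ((θ \ Ico i0 m ×ˢ {j0}) \ {(m, j0)}) (m, j0 - 1) where
  disjoint := disjoint_sdiff
  connected := boxConnected_singleton _
  mem := by simp [hleft]
  exists_adjacent := ⟨(m, j0), mem_singleton_self _, by simp [Adjacent]⟩
  eq_of_adjacent := by
    rintro u hu w hw huw
    rw [mem_singleton] at hu
    subst hu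
    simp only [mem_sdiff, mem_singleton, mem_Ico_prod_singleton_iff] at hw
    obtain ⟨⟨hwθ, hwA⟩, hwx⟩ := hw
    rcases huw.eq_or_eq_or_eq_or_eq with rfl | rfl | rfl | rfl <;> simp only at hwθ hwA ⊢
    · have := (h.mem_iff _).1 hwθ
      omega
    · exact (hwA ⟨by have := h.lt; omega, by omega, trivial⟩).elim
    · have := h.snd_le _ hwθ
      simp at this

theorem ColShape.corner_mem_seCorners (h : ColShape θ i0 j0 m) :
    (m, j0) ∈ seCorners (θ \ Ico i0 m ×ˢ {j0}) := by
  refine mem_seCorners.2 ⟨h.isAttachedAt.mem, fun hb => ?_, fun hb => ?_⟩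
  · have := (h.mem_iff _).1 (mem_sdiff.1 hb).1
    omega
  · have := h.snd_le _ (mem_sdiff.1 hb).1
    simp at this

theorem ColShape.left_notMem_seCorners (h : ColShape θ i0 j0 m) :
    (m, j0 - 1) ∉ seCorners (θ \ Ico i0 m ×ˢ {j0}) := fun hb =>
  (mem_seCorners.1 hb).2.2 (by simpa using h.isAttachedAt.mem)

theorem ColShape.seCorners_sdiff (h : ColShape θ i0 j0 m) :
    seCorners θ = seCorners (θ \ Ico i0 m ×ˢ {j0}) := by
  ext ⟨i, j⟩
  simp only [mem_seCorners, mem_sdiff, mem_Ico_prod_singleton_iff]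
  constructor
  · rintro ⟨hb, hdown, hright⟩
    refine ⟨⟨hb, fun ⟨hi₁, hi₂, hj⟩ => hdown ?_⟩, fun h' => hdown h'.1, fun h' => hright h'.1⟩
    subst hj
    exact (h.mem_iff _).2 ⟨by omega, by omega⟩
  · rintro ⟨⟨hb, hbA⟩, hdown, hright⟩
    refine ⟨hb, fun hd => hdown ⟨hd, fun ⟨_, _, hj⟩ => ?_⟩, fun hr => hright ⟨hr, ?_⟩⟩
    · subst hj
      have := (h.mem_iff _).1 hb
      exact hbA ⟨by omega, by omega, rfl⟩
    · rintro ⟨-, hi, hj⟩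
      have := h.le_fst _ hb (by simp only at hj ⊢; omega)
      simp only at this
      omega

theorem ColShape.Bcoef_eq (h : ColShape θ i0 j0 m) (hθ : IsRim θ) (hleft : (m, j0 - 1) ∈ θ)
    (p : ℤ) : Bcoef θ p =
      Bcoef (θ \ Ico i0 m ×ˢ {j0}) (p - #(Ico i0 m ×ˢ {j0})) -
        Bcoef (θ \ Ico i0 m ×ˢ {j0}) (p - #(Ico i0 m ×ˢ {j0}) + 1) :=
  Bcoef_eq_sub_of_isAttachedAt_pendant hθ h.arm_subset h.isAttachedAt
    (h.isAttachedAt_corner hleft) h.corner_mem_seCorners h.left_notMem_seCorners h.seCorners_sdiff p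

end ColShape

/-- The configuration around the top-right box `(i0, j0)` when the north-east arm is horizontal;
the arm is then `{i0} ×ˢ Ioc c j0`. -/
structure RowShape (θ : Finset (ℤ × ℤ)) (i0 j0 c : ℤ) : Prop where
  lt : c < j0
  mem_iff : ∀ j, (i0, j) ∈ θ ↔ c ≤ j ∧ j ≤ j0
  snd_le : ∀ b ∈ θ, i0 < b.1 → b.2 ≤ c
  le_fst : ∀ b ∈ θ, i0 ≤ b.1

section RowShape

variable {θ : Finset (ℤ × ℤ)} {i0 j0 c : ℤ}

/-- If neither `(i0 + 1, j0)` nor `(i0, j0 - 1)` were in `θ`, the box `(i0, j0)` would be the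
whole arm and would have no neighbour in `θ`. -/
theorem IsTopRight.mem_left (ht : IsTopRight θ i0 j0) (hrow : RowConvex θ) (hcol : ColConvex θ)
    {s : ℕ} (harm : IsRowOrCol (armAt θ i0 j0 s))
    (hconn : ∃ b ∈ armAt θ i0 j0 s, ∃ b' ∈ θ \ armAt θ i0 j0 s, Adjacent b b')
    (hbelow : (i0 + 1, j0) ∉ θ) : (i0, j0 - 1) ∈ θ := by
  by_contra hleft
  have hline : ∀ b ∈ θ, b.1 = i0 ∨ b.2 = j0 → b = (i0, j0) := by
    rintro ⟨i, j⟩ hb hij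
    simp only [Prod.mk.injEq] at hij ⊢
    rcases hij with rfl | rfl
    · have := ht.snd_le_of_fst_eq _ hb rfl
      refine ⟨rfl, by_contra fun hj => hleft (hrow hb ht.mem ?_ ?_)⟩ <;> simp only at * <;> omega
    · have := ht.le_fst _ hb
      refine ⟨by_contra fun hi => hbelow (hcol ht.mem hb ?_ ?_), rfl⟩ <;> simp only at * <;> omega
  obtain ⟨u, hu, v, hv, huv⟩ := hconn
  obtain ⟨hvθ, hvA⟩ := mem_sdiff.1 hv
  obtain ⟨huθ, hu₁, hu₂, hu₃, hu₄⟩ := mem_armAt.1 hu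
  have hi0 : (i0, j0) ∈ armAt θ i0 j0 s := mem_armAt.2 ⟨ht.mem, le_rfl, by simp only; omega,
    by simp only; omega, le_rfl⟩
  have hu0 : u = (i0, j0) := by
    rcases harm with ⟨r, hr⟩ | ⟨c, hc⟩
    · exact hline u huθ (Or.inl ((hr u hu).trans (hr _ hi0).symm))
    · exact hline u huθ (Or.inr ((hc u hu).trans (hc _ hi0).symm))
  subst hu0
  refine hvA (hline v hvθ ?_ ▸ hu)
  rcases huv.eq_or_eq_or_eq_or_eq with rfl | rfl | rfl | rfl <;> simp

theorem IsTopRight.exists_rowShape (ht : IsTopRight θ i0 j0) (hθ : IsRim θ) (hrow : RowConvex θ)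
    (hleft : (i0, j0 - 1) ∈ θ) : ∃ c, RowShape θ i0 j0 c := by
  obtain ⟨⟨i, c⟩, hic, hmin⟩ := exists_min_image (θ.filter (·.1 = i0)) Prod.snd
    ⟨_, mem_filter.2 ⟨ht.mem, rfl⟩⟩
  obtain ⟨hc, rfl⟩ := mem_filter.1 hic
  have hmin' : ∀ j, (i, j) ∈ θ → c ≤ j := fun j hj => hmin (i, j) (mem_filter.2 ⟨hj, rfl⟩)
  refine ⟨c, by have := hmin' _ hleft; omega, fun j => ⟨fun hj => ⟨hmin' j hj,
    ht.snd_le_of_fst_eq _ hj rfl⟩, fun hj => hrow hc ht.mem hj.1 hj.2⟩, fun b hb hbi => ?_,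
    ht.le_fst⟩
  by_contra h
  exact hθ.not_lt_and_lt hc hb ⟨hbi, by simpa using h⟩

theorem RowShape.armAt_eq (h : RowShape θ i0 j0 c) {t : ℕ} (ht : c ≤ j0 - t) :
    armAt θ i0 j0 t = {i0} ×ˢ Ioc (j0 - t) j0 := by
  ext ⟨i, j⟩
  simp only [mem_armAt, mem_singleton_prod_Ioc_iff]
  constructor
  · rintro ⟨hij, hi₁, -, hj₁, hj₂⟩
    have := h.snd_le _ hij
    simp only at this
    omega
  · rintro ⟨rfl, hj⟩
    exact ⟨(h.mem_iff j).2 ⟨by omega, hj.2⟩, le_rfl, by omega, by omega, hj.2⟩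

theorem RowShape.le_add_of_maximal (h : RowShape θ i0 j0 c) {s : ℕ}
    (hmax : ∀ s' : ℕ, 1 ≤ s' → IsRowOrCol (armAt θ i0 j0 s') → s' ≤ s) : j0 ≤ c + s := by
  have hrow : IsRowOrCol (armAt θ i0 j0 (j0 - c).toNat) := by
    refine Or.inl ⟨i0, fun b hb => ?_⟩
    rw [h.armAt_eq (by have := h.lt; omega)] at hb
    exact (mem_singleton_prod_Ioc_iff.1 hb).1
  have := hmax _ (by have := h.lt; omega) hrow
  omega

/-- An arm reaching past column `c` would be all of row `i0` together with nothing below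
`(i0, c)`, hence a component of `θ` by itself. -/
theorem RowShape.add_le_of_adjacent (h : RowShape θ i0 j0 c) {s : ℕ}
    (harm : IsRowOrCol (armAt θ i0 j0 s))
    (hconn : ∃ b ∈ armAt θ i0 j0 s, ∃ b' ∈ θ \ armAt θ i0 j0 s, Adjacent b b') :
    c + s ≤ j0 := by
  by_contra! hs
  have hlt := h.lt
  have hi0 : (i0, j0) ∈ θ := (h.mem_iff _).2 ⟨by omega, le_rfl⟩
  have hi1 : (i0, j0 - 1) ∈ θ := (h.mem_iff _).2 ⟨by omega, by omega⟩
  have hrow : ∀ b ∈ armAt θ i0 j0 s, b.1 = i0 := by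
    rcases harm with ⟨r, hr⟩ | ⟨c, hc⟩
    · intro b hb
      rw [hr b hb, ← hr _ (mem_armAt.2 ⟨hi0, by simp only; omega⟩)]
    · have h₁ := hc _ (mem_armAt.2 ⟨hi0, by simp only; omega⟩)
      have h₂ := hc _ (mem_armAt.2 ⟨hi1, by simp only; omega⟩)
      simp only at h₁ h₂
      omega
  obtain ⟨u, hu, v, hv, huv⟩ := hconn
  obtain ⟨hvθ, hvA⟩ := mem_sdiff.1 hv
  have hu1 := hrow u hu
  obtain ⟨huθ, -, -, hu₃, hu₄⟩ := mem_armAt.1 hu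
  have hu2 := (h.mem_iff u.2).1 (hu1 ▸ huθ)
  refine hvA (mem_armAt.2 ⟨hvθ, ?_⟩)
  rcases huv.eq_or_eq_or_eq_or_eq with rfl | rfl | rfl | rfl <;> simp only at hvθ ⊢
  · have := h.snd_le _ hvθ (by simp only; omega); simp only at this; omega
  · have := h.le_fst _ hvθ; simp only at this; omega
  · have := (h.mem_iff _).1 (hu1 ▸ hvθ); omega
  · have := (h.mem_iff _).1 (hu1 ▸ hvθ); omega

theorem RowShape.mem_below (h : RowShape θ i0 j0 c) (hcol : ColConvex θ) {s : ℕ}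
    (hmax : ∀ s' : ℕ, 1 ≤ s' → IsRowOrCol (armAt θ i0 j0 s') → s' ≤ s) (hs : c + s = j0) :
    (i0 + 1, c) ∈ θ := by
  by_contra hbelow
  have hrow : IsRowOrCol (armAt θ i0 j0 (s + 1)) := by
    refine Or.inl ⟨i0, fun ⟨i, j⟩ hb => ?_⟩
    obtain ⟨hb, hi₁, hi₂, hj₁, hj₂⟩ := mem_armAt.1 hb
    simp only at hi₁ hi₂ hj₁ hj₂ ⊢
    by_contra hi
    have := h.snd_le _ hb (by simp only; omega)
    simp only at this
    have hic : (i, c) ∈ θ := by rwa [show c = j by omega]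
    exact hbelow (hcol ((h.mem_iff c).2 ⟨le_rfl, h.lt.le⟩) hic (by omega) (by omega))
  have := hmax (s + 1) (by omega) hrow
  omega

theorem RowShape.arm_subset (h : RowShape θ i0 j0 c) : {i0} ×ˢ Ioc c j0 ⊆ θ := by
  rintro ⟨i, j⟩ hb
  obtain ⟨rfl, hj₁, hj₂⟩ := mem_singleton_prod_Ioc_iff.1 hb
  exact (h.mem_iff j).2 ⟨hj₁.le, hj₂⟩

theorem RowShape.isAttachedAt (h : RowShape θ i0 j0 c) {e : ℤ} (hce : c < e) (he : e ≤ j0) :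
    IsAttachedAt ({i0} ×ˢ Ioc c e) (θ \ {i0} ×ˢ Ioc c j0) (i0, c) where
  disjoint := disjoint_sdiff.mono_left (product_subset_product_right (Ioc_subset_Ioc_right he))
  connected := boxConnected_singleton_prod_Ioc _ _ _
  mem := mem_sdiff.2 ⟨(h.mem_iff c).2 ⟨le_rfl, h.lt.le⟩, by simp⟩
  exists_adjacent := ⟨(i0, c + 1), mem_singleton_prod_Ioc_iff.2 ⟨rfl, by omega, by omega⟩,
    by simp [Adjacent]⟩
  eq_of_adjacent := by
    intro u hu w hw huw
    obtain ⟨hu₁, hu₂, hu₃⟩ := mem_singleton_prod_Ioc_iff.1 hu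
    obtain ⟨hwθ, hwA⟩ := mem_sdiff.1 hw
    rw [mem_singleton_prod_Ioc_iff] at hwA
    rcases huw.eq_or_eq_or_eq_or_eq with rfl | rfl | rfl | rfl <;> simp only at hwθ hwA ⊢
    · have := h.snd_le _ hwθ (by simp only; omega)
      simp only at this
      omega
    · have := h.le_fst _ hwθ
      simp only at this
      omega
    · have := (h.mem_iff _).1 (hu₁ ▸ hwθ)
      omega
    · have := (h.mem_iff _).1 (hu₁ ▸ hwθ)
      rw [Prod.ext_iff]
      exact ⟨hu₁, by simp only; omega⟩

theorem RowShape.arm_eq_or_isAttachedAt_erase (h : RowShape θ i0 j0 c) :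
    {i0} ×ˢ Ioc c j0 = {(i0, j0)} ∨
      IsAttachedAt (({i0} ×ˢ Ioc c j0).erase (i0, j0)) (θ \ {i0} ×ˢ Ioc c j0) (i0, c) := by
  have hlt := h.lt
  rcases (show c + 1 = j0 ∨ c + 1 < j0 by omega) with hc | hc
  · left
    ext ⟨i, j⟩
    simp only [mem_singleton_prod_Ioc_iff, mem_singleton, Prod.mk.injEq]
    omega
  · right
    convert h.isAttachedAt (e := j0 - 1) (by omega) (by omega) using 1
    ext ⟨i, j⟩
    simp only [mem_erase, mem_singleton_prod_Ioc_iff, ne_eq, Prod.mk.injEq]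
    omega

theorem RowShape.seCorners_eq_insert (h : RowShape θ i0 j0 c) (hbelow : (i0 + 1, c) ∈ θ) :
    seCorners θ = insert (i0, j0) (seCorners (θ \ {i0} ×ˢ Ioc c j0)) := by
  have hlt := h.lt
  ext ⟨i, j⟩
  simp only [mem_insert, mem_seCorners, mem_sdiff, mem_singleton_prod_Ioc_iff, Prod.mk.injEq]
  constructor
  · rintro ⟨hb, hdown, hright⟩
    by_cases hA : i = i0 ∧ c < j ∧ j ≤ j0
    · obtain ⟨rfl, hj₁, hj₂⟩ := hA
      refine Or.inl ⟨rfl, by_contra fun hj => hright ((h.mem_iff _).2 ⟨by omega, by omega⟩)⟩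
    · exact Or.inr ⟨⟨hb, hA⟩, fun h' => hdown h'.1, fun h' => hright h'.1⟩
  · rintro (⟨rfl, rfl⟩ | ⟨⟨hb, hbA⟩, hdown, hright⟩)
    · refine ⟨(h.mem_iff _).2 ⟨hlt.le, le_rfl⟩, fun hd => ?_, fun hr => ?_⟩
      · have := h.snd_le _ hd (by simp)
        simp only at this
        omega
      · have := (h.mem_iff _).1 hr
        omega
    · refine ⟨hb, fun hd => hdown ⟨hd, fun hA => ?_⟩, fun hr => hright ⟨hr, ?_⟩⟩
      · have := hA.1
        have := h.le_fst _ hb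
        simp only at this
        omega
      · rintro ⟨rfl, hj₁, hj₂⟩
        have hj : j = c := by
          by_contra hj
          exact hbA ⟨rfl, by omega, by omega⟩
        subst hj
        exact hdown ⟨hbelow, fun hA => by have := hA.1; omega⟩

theorem RowShape.Bcoef_eq (h : RowShape θ i0 j0 c) (hθ : IsRim θ) (hbelow : (i0 + 1, c) ∈ θ)
    (p : ℤ) : Bcoef θ p =
      Bcoef (θ \ {i0} ×ˢ Ioc c j0) (p - #({i0} ×ˢ Ioc c j0)) -
        Bcoef (θ \ {i0} ×ˢ Ioc c j0) (p - #({i0} ×ˢ Ioc c j0) + 1) :=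
  Bcoef_eq_sub_of_isAttachedAt_tip hθ h.arm_subset
    (mem_singleton_prod_Ioc_iff.2 ⟨rfl, h.lt, le_rfl⟩) (h.isAttachedAt h.lt le_rfl)
    h.arm_eq_or_isAttachedAt_erase
    (fun hc => (mem_seCorners.1 hc).2.1 (mem_sdiff.2 ⟨hbelow, by simp⟩))
    (h.seCorners_eq_insert hbelow) p

end RowShape

theorem Bcoef_arm_connected_general (n : ℕ) (θ : Finset (ℤ × ℤ))
    (hθ : IsShiftedSkewDiagram n θ) (hrim : IsRim θ)
    (i0 j0 : ℤ) (hbox : (i0, j0) ∈ θ) (htop : ∀ b ∈ θ, i0 ≤ b.1)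
    (hright : ∀ b ∈ θ, b.1 = i0 → b.2 ≤ j0)
    (s : ℕ) (harm : IsRowOrCol (armAt θ i0 j0 s))
    (hmax : ∀ s' : ℕ, 1 ≤ s' → IsRowOrCol (armAt θ i0 j0 s') → s' ≤ s)
    (θhat : Finset (ℤ × ℤ)) (hθhat : θhat = θ \ armAt θ i0 j0 s)
    (hconn : ∃ b ∈ armAt θ i0 j0 s, ∃ b' ∈ θhat, Adjacent b b')
    (a : ℤ) (ha : a = (θ.card : ℤ) - (θhat.card : ℤ))
    (p : ℤ) :
    Bcoef θ p = Bcoef θhat (p - a) - Bcoef θhat (p - a + 1) := by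
  have ht : IsTopRight θ i0 j0 := ⟨hbox, htop, hright⟩
  have harm_sub : armAt θ i0 j0 s ⊆ θ := filter_subset _ _
  obtain rfl : a = #(armAt θ i0 j0 s) := by
    rw [ha, hθhat, card_sdiff_of_subset harm_sub, Nat.cast_sub (card_le_card harm_sub)]
    ring
  subst hθhat
  by_cases hbelow : (i0 + 1, j0) ∈ θ
  · obtain ⟨m, h⟩ := ht.exists_colShape hrim hθ.colConvex hbelow
    have hs : i0 + s = m := le_antisymm (h.add_le_of_adjacent harm hconn) (h.le_add_of_maximal hmax)
    rw [h.armAt_eq hs.le, hs]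
    exact h.Bcoef_eq hrim (h.mem_left hθ.rowConvex hmax hs) p
  · obtain ⟨c, h⟩ := ht.exists_rowShape hrim hθ.rowConvex
      (ht.mem_left hθ.rowConvex hθ.colConvex harm hconn hbelow)
    have hs : c + s = j0 := le_antisymm (h.add_le_of_adjacent harm hconn) (h.le_add_of_maximal hmax)
    rw [h.armAt_eq (by omega), show j0 - s = c by omega]
    exact h.Bcoef_eq hrim (h.mem_below hθ.colConvex hmax hs) p

/-- Let `θ` be a nonempty rim whose north-east arm (the largest row or column
obtained by intersecting `θ` with a square whose upper-right box `(i0,j0)` is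
the rightmost box of the top row of `θ`) is connected to `θ̂ = θ` minus the
arm, with `θ̂ ≠ ∅` and `a = |θ| - |θ̂|`.  Then for every integer `p ≥ 1`,
`B(θ,p) = B(θ̂, p-a) - B(θ̂, p-a+1)`. -/
theorem Bcoef_arm_connected (n : ℕ) (hn : 0 < n) (θ : Finset (ℤ × ℤ))
    (hθ : IsShiftedSkewDiagram n θ) (hrim : IsRim θ) (hne : θ.Nonempty)
    (i0 j0 : ℤ) (hbox : (i0, j0) ∈ θ) (htop : ∀ b ∈ θ, i0 ≤ b.1)
    (hright : ∀ b ∈ θ, b.1 = i0 → b.2 ≤ j0)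
    (s : ℕ) (hs : 1 ≤ s) (harm : IsRowOrCol (armAt θ i0 j0 s))
    (hmax : ∀ s' : ℕ, 1 ≤ s' → IsRowOrCol (armAt θ i0 j0 s') → s' ≤ s)
    (θhat : Finset (ℤ × ℤ)) (hθhat : θhat = θ \ armAt θ i0 j0 s)
    (hhatne : θhat.Nonempty)
    (hconn : ∃ b ∈ armAt θ i0 j0 s, ∃ b' ∈ θhat, Adjacent b b')
    (a : ℤ) (ha : a = (θ.card : ℤ) - (θhat.card : ℤ))
    (p : ℤ) (hp : 1 ≤ p) :
    Bcoef θ p = Bcoef θhat (p - a) - Bcoef θhat (p - a + 1) :=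
  Bcoef_arm_connected_general n θ hθ hrim i0 j0 hbox htop hright s harm hmax θhat hθhat hconn a ha p
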